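/- arXiv:2509.19039 — 9 statements merged into one kernel-verified Lean document; each statement's English description precedes it below -/
import Mathlib

section
/- Let V be a finite-dimensional real vector space, ω an alternating bilinear form on V, K := rad ω its radical, and P a linear projection of V onto K. Then the thickened form ω̃ on Ṽ := V × K*, defined by ω̃((v,α),(w,β)) := ω(v,w) + α(P w) − β(P v), is a nondegenerate alternating bilinear form: if ω̃(x, y) = 0 for all y ∈ Ṽ, then x = 0. -/
/-- The radical of a bilinear form `ω` on `V`: vectors `v` with `ω v w = 0` for all `w`. -/
def biRadical {V : Type*} [AddCommGroup V] [Module ℝ V]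
    (ω : V →ₗ[ℝ] V →ₗ[ℝ] ℝ) : Submodule ℝ V where
  carrier := {v | ∀ w, ω v w = 0}
  add_mem' := by
    intro a b ha hb w
    simp only [Set.mem_setOf_eq] at ha hb
    simp [map_add, ha w, hb w]
  zero_mem' := by intro w; simp
  smul_mem' := by
    intro c a ha w
    simp only [Set.mem_setOf_eq] at ha
    simp [ha w]

/-- The thickened form `ω̃` on `Ṽ = V × K*`:
`ω̃((v,α),(w,β)) = ω(v,w) + α(P w) − β(P v)`. -/
def thick {V : Type*} [AddCommGroup V] [Module ℝ V]
    (ω : V →ₗ[ℝ] V →ₗ[ℝ] ℝ) (K : Submodule ℝ V) (P : V →ₗ[ℝ] V)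
    (hPK : ∀ v : V, P v ∈ K) :
    (V × Module.Dual ℝ K) → (V × Module.Dual ℝ K) → ℝ :=
  fun x y => ω x.1 y.1 + x.2 ⟨P y.1, hPK y.1⟩ - y.2 ⟨P x.1, hPK x.1⟩

/-- For an alternating bilinear form `ω` on a finite-dimensional real vector
space `V`, with `K = rad ω` and `P` a linear projection of `V` onto `K`, the thickened form
`ω̃` on `Ṽ = V × K*` is nondegenerate. -/
theorem symplectic_thickening_nondegenerate
    (V : Type*) [AddCommGroup V] [Module ℝ V] [FiniteDimensional ℝ V]
    (ω : V →ₗ[ℝ] V →ₗ[ℝ] ℝ) (halt : ∀ v, ω v v = 0)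
    (P : V →ₗ[ℝ] V) (hidem : P ∘ₗ P = P)
    (hPK : ∀ v : V, P v ∈ biRadical ω)
    (hrange : LinearMap.range P = biRadical ω) :
    ∀ x : V × Module.Dual ℝ (biRadical ω),
      (∀ y, thick ω (biRadical ω) P hPK x y = 0) → x = 0 := by
  rintro ⟨v, α⟩ hx
  -- skew-symmetry
  have hskew : ∀ a b, ω a b = - ω b a := by
    intro a b
    have h := halt (a + b)
    simp only [map_add, LinearMap.add_apply, halt] at h
    linarith
  -- from y = (0, β): β (P v) = 0 for all β, hence P v = 0
  have hPv : P v = 0 := by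
    have h : ∀ β : Module.Dual ℝ (biRadical ω),
        β ⟨P v, hPK v⟩ = 0 := by
      intro β
      have := hx (0, β)
      simp only [thick, map_zero, LinearMap.zero_apply, zero_add] at this
      have hz : ∀ h : (0:V) ∈ biRadical ω, (⟨0, h⟩ : biRadical ω) = 0 :=
        fun h => rfl
      rw [hz, map_zero, zero_sub, neg_eq_zero] at this
      exact this
    have h2 : (⟨P v, hPK v⟩ : biRadical ω) = 0 :=
      (Module.forall_dual_apply_eq_zero_iff ℝ _).mp h
    simpa using congrArg Subtype.val h2
  -- from y = (w, 0): ω v w + α (P w) = 0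
  have hvw : ∀ w, ω v w + α ⟨P w, hPK w⟩ = 0 := by
    intro w
    have := hx (w, 0)
    simpa [thick] using this
  -- α vanishes: for k ∈ K, k = P k and ω v k = -ω k v = 0
  have hα : α = 0 := by
    ext k
    have hk : k.val ∈ LinearMap.range P := by rw [hrange]; exact k.2
    obtain ⟨u, hu⟩ := hk
    have hPk : P k.val = k.val := by
      have := congrArg (fun f => f u) hidem
      simp only [LinearMap.comp_apply] at this
      rw [← hu]; exact this
    have hωvk : ω v k.val = 0 := by
      rw [hskew v k.val, k.2 v, neg_zero]
    have h := hvw k.val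
    rw [hωvk, zero_add] at h
    have hk2 : (⟨P k.val, hPK k.val⟩ : biRadical ω) = k := Subtype.ext hPk
    rw [hk2] at h
    simpa using h
  -- now ω v w = 0 for all w, so v ∈ K = range P, so v = P v = 0
  have hvK : v ∈ biRadical ω := by
    intro w
    have := hvw w
    rw [hα] at this
    simpa using this
  have hk : v ∈ LinearMap.range P := by rw [hrange]; exact hvK
  obtain ⟨u, hu⟩ := hk
  have : v = P v := by
    have := congrArg (fun f => f u) hidem
    simp only [LinearMap.comp_apply] at this
    rw [← hu]; exact this.symm
  have hv0 : v = 0 := by rw [this, hPv]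
  simp [hv0, hα, Prod.ext_iff]
end

section
/- Let V be a finite-dimensional real vector space, ω an alternating bilinear form on V, K := rad ω its radical, P a linear projection of V onto K, and ω̃ the thickened form on Ṽ := V × K* given by ω̃((v,α),(w,β)) := ω(v,w) + α(P w) − β(P v). Then the ω̃-orthogonal of the subspace V × {0}, namely {x ∈ Ṽ : ω̃(x, (w,0)) = 0 for all w ∈ V}, is exactly K × {0}; in particular it is contained in V × {0}, so V × {0} is a coisotropic subspace of (Ṽ, ω̃). -/
/-- With `K = rad ω` and `P` a projection onto `K`, the `ω̃`-orthogonal of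
`V × {0}` in `Ṽ = V × K*` is exactly `K × {0}`; in particular it is contained in `V × {0}`,
so `V × {0}` is a coisotropic subspace of `(Ṽ, ω̃)`. -/
theorem symplectic_thickening_coisotropic
    (V : Type*) [AddCommGroup V] [Module ℝ V] [FiniteDimensional ℝ V]
    (ω : V →ₗ[ℝ] V →ₗ[ℝ] ℝ) (halt : ∀ v, ω v v = 0)
    (P : V →ₗ[ℝ] V) (hidem : P ∘ₗ P = P)
    (hPK : ∀ v : V, P v ∈ biRadical ω)
    (hrange : LinearMap.range P = biRadical ω) :
    ({x : V × Module.Dual ℝ (biRadical ω) |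
        ∀ w : V, thick ω (biRadical ω) P hPK x (w, 0) = 0}
      = {x : V × Module.Dual ℝ (biRadical ω) | x.1 ∈ biRadical ω ∧ x.2 = 0}) ∧
    ({x : V × Module.Dual ℝ (biRadical ω) |
        ∀ w : V, thick ω (biRadical ω) P hPK x (w, 0) = 0}
      ⊆ {x : V × Module.Dual ℝ (biRadical ω) | x.2 = 0}) := by
  have skew : ∀ v w, ω v w = - ω w v := by
    intro v w
    have h := halt (v + w)
    simp [map_add, halt v, halt w] at h
    linarith
  have key : {x : V × Module.Dual ℝ (biRadical ω) |
        ∀ w : V, thick ω (biRadical ω) P hPK x (w, 0) = 0}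
      = {x : V × Module.Dual ℝ (biRadical ω) | x.1 ∈ biRadical ω ∧ x.2 = 0} := by
    ext ⟨v, α⟩
    simp only [Set.mem_setOf_eq, thick]
    constructor
    · intro h
      -- For w ∈ K : ω v w = 0, hence α (P w) = 0; P fixes K so α = 0.
      have hPfix : ∀ k : V, k ∈ biRadical ω → P k = k := by
        intro k hk
        rw [← hrange] at hk
        obtain ⟨u, hu⟩ := hk
        have : P (P u) = P u := by
          have := congrArg (fun f => f u) hidem
          simpa using this
        rw [← hu]; exact this
      have hα : α = 0 := by
        ext ⟨k, hk⟩
        have h1 := h k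
        have h2 : ω v k = 0 := by rw [skew v k, hk v]; ring
        simp only [LinearMap.zero_apply, map_zero, sub_zero] at h1
        rw [h2] at h1
        have : α ⟨P k, hPK k⟩ = 0 := by linarith
        have hek : (⟨P k, hPK k⟩ : biRadical ω) = ⟨k, hk⟩ := by
          ext; exact hPfix k hk
        rw [hek] at this
        simpa using this
      subst hα
      refine ⟨fun w => ?_, rfl⟩
      have h1 := h w
      simpa using h1
    · rintro ⟨hv, hα⟩ w
      subst hα
      simp [hv w]
  exact ⟨key, fun x hx => (key ▸ hx).2⟩
end

section
/- Let V be a finite-dimensional real vector space, η a linear functional on V, ω an alternating bilinear form on V, K := ker η ∩ rad ω, and P a linear projection of V onto K. On Ṽ := V × K* define η̃(v,α) := η(v) and the thickened form ω̃((v,α),(w,β)) := ω(v,w) + α(P w) − β(P v). Then ker η̃ ∩ rad ω̃ = {0}: if η(v) = 0 and ω̃((v,α), y) = 0 for all y ∈ Ṽ, then (v,α) = (0,0). -/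
/-- For a pre-cosymplectic structure `(η, ω)` on a finite-dimensional real
vector space `V`, with `K = ker η ∩ rad ω` and `P` a projection onto `K`, the thickened
structure `(η̃, ω̃)` on `Ṽ = V × K*` (with `η̃(v,α) = η(v)`) satisfies
`ker η̃ ∩ rad ω̃ = {0}`. -/
theorem cosymplectic_thickening_nondegenerate
    (V : Type*) [AddCommGroup V] [Module ℝ V] [FiniteDimensional ℝ V]
    (η : V →ₗ[ℝ] ℝ)
    (ω : V →ₗ[ℝ] V →ₗ[ℝ] ℝ) (halt : ∀ v, ω v v = 0)
    (P : V →ₗ[ℝ] V) (hidem : P ∘ₗ P = P)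
    (hPK : ∀ v : V, P v ∈ LinearMap.ker η ⊓ biRadical ω)
    (hrange : LinearMap.range P = LinearMap.ker η ⊓ biRadical ω) :
    ∀ x : V × Module.Dual ℝ ↥(LinearMap.ker η ⊓ biRadical ω),
      η x.1 = 0 →
      (∀ y, thick ω (LinearMap.ker η ⊓ biRadical ω) P hPK x y = 0) →
      x = 0 := by
  set K := LinearMap.ker η ⊓ biRadical ω with hK
  -- P is the identity on K
  have hPid : ∀ k ∈ K, P k = k := by
    intro k hk
    rw [← hrange] at hk
    obtain ⟨u, rfl⟩ := hk
    have := congrArg (fun f => f u) hidem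
    simpa using this
  -- ω is skew
  have hskew : ∀ a b, ω a b = - ω b a := by
    intro a b
    have h := halt (a + b)
    simp [map_add, halt a, halt b] at h
    linarith
  rintro ⟨v, α⟩ hη hrad
  -- Step 1: P v = 0
  have hPv : P v = 0 := by
    have h0 : ∀ β : Module.Dual ℝ K, β ⟨P v, hPK v⟩ = 0 := by
      intro β
      have h := hrad (0, β)
      have h0' : ∀ p : (0:V) ∈ K, (⟨(0:V), p⟩ : K) = 0 := fun p => rfl
      simp [thick, h0'] at h
      linarith
    have : (⟨P v, hPK v⟩ : K) = 0 :=
      (Module.forall_dual_apply_eq_zero_iff ℝ _).mp h0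
    simpa using congrArg Subtype.val this
  -- Step 2: ω v w = -α (P w)
  have key : ∀ w : V, ω v w = - α ⟨P w, hPK w⟩ := by
    intro w
    have := hrad (w, 0)
    simp [thick, hPv] at this
    linarith
  -- Step 3: ω v (P w) = 0 since P w ∈ rad ω
  have hrad' : ∀ w : V, ω v (P w) = 0 := by
    intro w
    have hm : P w ∈ biRadical ω := (hPK w).2
    rw [hskew]
    simpa using hm v
  -- Step 4: v ∈ rad ω
  have hv : ∀ w : V, ω v w = 0 := by
    intro w
    have h1 := key (w - P w)
    have hPP : P (P w) = P w := by
      have := congrArg (fun f => f w) hidem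
      simpa using this
    have hz : (⟨P (w - P w), hPK (w - P w)⟩ : K) = 0 :=
      Subtype.ext (by simp [map_sub, hPP])
    rw [hz] at h1
    rw [map_sub, hrad'] at h1
    simp at h1
    linarith
  have hvK : v ∈ K := ⟨hη, hv⟩
  have hv0 : v = 0 := by rw [← hPid v hvK, hPv]
  -- Step 5: α = 0
  have hα : α = 0 := by
    ext k
    have := key k.1
    rw [hv0] at this
    have hPk : (⟨P k.1, hPK k.1⟩ : K) = k := Subtype.ext (hPid k.1 k.2)
    rw [hPk] at this
    simp at this
    simp [this]
  simp [hv0, hα]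
end

section
/- Let V be a finite-dimensional real vector space, η a linear functional on V, ω an alternating bilinear form on V, K := ker η ∩ rad ω, P a linear projection of V onto K, and on Ṽ := V × K* let η̃(v,α) := η(v) and ω̃((v,α),(w,β)) := ω(v,w) + α(P w) − β(P v). Then the cosymplectic orthogonal of V × {0}, namely {(v,α) ∈ Ṽ : η(v) = 0 and ω̃((v,α),(w,0)) = 0 for all w ∈ V}, equals K × {0}; in particular it is contained in V × {0}, so V × {0} is a coisotropic subspace of (Ṽ, η̃, ω̃). -/
section Thickening

variable {V : Type*} [AddCommGroup V] [Module ℝ V]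
  {ω : V →ₗ[ℝ] V →ₗ[ℝ] ℝ} {K : Submodule ℝ V} {P : V →ₗ[ℝ] V} {hPK : ∀ v : V, P v ∈ K}

@[simp]
theorem thick_apply_zero_dual (x : V × Module.Dual ℝ K) (w : V) :
    thick ω K P hPK x (w, 0) = ω x.1 w + x.2 ⟨P w, hPK w⟩ := by
  simp [thick]

theorem LinearMap.IsAlt.apply_mem_biRadical (halt : ω.IsAlt) (v : V) {k : V}
    (hk : k ∈ biRadical ω) : ω v k = 0 :=
  halt.eq_iff.mpr (hk v)

theorem forall_thick_zero_dual_eq_zero_iff (halt : ω.IsAlt) (hKrad : K ≤ biRadical ω)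
    (hPfix : ∀ k ∈ K, P k = k) (x : V × Module.Dual ℝ K) :
    (∀ w : V, thick ω K P hPK x (w, 0) = 0) ↔ x.1 ∈ biRadical ω ∧ x.2 = 0 := by
  obtain ⟨v, α⟩ := x
  simp only [thick_apply_zero_dual]
  constructor
  · intro h
    have hα : α = 0 := LinearMap.ext fun k => by
      have hk := h k
      have hPk : (⟨P k, hPK k⟩ : K) = k := Subtype.ext (hPfix k k.2)
      rwa [halt.apply_mem_biRadical v (hKrad k.2), zero_add, hPk] at hk
    subst hα
    exact ⟨fun w => by simpa using h w, rfl⟩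
  · rintro ⟨hv, rfl⟩ w
    simpa using hv w

end Thickening

theorem cosymplectic_thickening_coisotropic_general
    (V : Type*) [AddCommGroup V] [Module ℝ V]
    (η : V →ₗ[ℝ] ℝ)
    (ω : V →ₗ[ℝ] V →ₗ[ℝ] ℝ) (halt : ∀ v, ω v v = 0)
    (P : V →ₗ[ℝ] V) (hidem : P ∘ₗ P = P)
    (hPK : ∀ v : V, P v ∈ LinearMap.ker η ⊓ biRadical ω)
    (hrange : LinearMap.range P = LinearMap.ker η ⊓ biRadical ω) :
    ({x : V × Module.Dual ℝ ↥(LinearMap.ker η ⊓ biRadical ω) |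
        η x.1 = 0 ∧
          ∀ w : V, thick ω (LinearMap.ker η ⊓ biRadical ω) P hPK x (w, 0) = 0}
      = {x : V × Module.Dual ℝ ↥(LinearMap.ker η ⊓ biRadical ω) |
          x.1 ∈ LinearMap.ker η ⊓ biRadical ω ∧ x.2 = 0}) ∧
    ({x : V × Module.Dual ℝ ↥(LinearMap.ker η ⊓ biRadical ω) |
        η x.1 = 0 ∧
          ∀ w : V, thick ω (LinearMap.ker η ⊓ biRadical ω) P hPK x (w, 0) = 0}
      ⊆ {x : V × Module.Dual ℝ ↥(LinearMap.ker η ⊓ biRadical ω) | x.2 = 0}) := by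
  have hPfix : ∀ k ∈ LinearMap.ker η ⊓ biRadical ω, P k = k := fun k hk =>
    LinearMap.IsIdempotentElem.mem_range_iff (p := P) hidem |>.mp (hrange ▸ hk)
  have horth : ∀ x : V × Module.Dual ℝ ↥(LinearMap.ker η ⊓ biRadical ω),
      (η x.1 = 0 ∧ ∀ w : V, thick ω (LinearMap.ker η ⊓ biRadical ω) P hPK x (w, 0) = 0) ↔
        x.1 ∈ LinearMap.ker η ⊓ biRadical ω ∧ x.2 = 0 := fun x => by
    rw [forall_thick_zero_dual_eq_zero_iff halt inf_le_right hPfix, ← and_assoc]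
    rfl
  exact ⟨Set.ext horth, fun x hx => ((horth x).mp hx).2⟩

/-- For a pre-cosymplectic structure `(η, ω)` with `K = ker η ∩ rad ω` and `P`
a projection onto `K`, the cosymplectic orthogonal of `V × {0}` in `(Ṽ, η̃, ω̃)` equals
`K × {0}`; in particular it is contained in `V × {0}`, so `V × {0}` is coisotropic. -/
theorem cosymplectic_thickening_coisotropic
    (V : Type*) [AddCommGroup V] [Module ℝ V] [FiniteDimensional ℝ V]
    (η : V →ₗ[ℝ] ℝ)
    (ω : V →ₗ[ℝ] V →ₗ[ℝ] ℝ) (halt : ∀ v, ω v v = 0)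
    (P : V →ₗ[ℝ] V) (hidem : P ∘ₗ P = P)
    (hPK : ∀ v : V, P v ∈ LinearMap.ker η ⊓ biRadical ω)
    (hrange : LinearMap.range P = LinearMap.ker η ⊓ biRadical ω) :
    ({x : V × Module.Dual ℝ ↥(LinearMap.ker η ⊓ biRadical ω) |
        η x.1 = 0 ∧
          ∀ w : V, thick ω (LinearMap.ker η ⊓ biRadical ω) P hPK x (w, 0) = 0}
      = {x : V × Module.Dual ℝ ↥(LinearMap.ker η ⊓ biRadical ω) |
          x.1 ∈ LinearMap.ker η ⊓ biRadical ω ∧ x.2 = 0}) ∧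
    ({x : V × Module.Dual ℝ ↥(LinearMap.ker η ⊓ biRadical ω) |
        η x.1 = 0 ∧
          ∀ w : V, thick ω (LinearMap.ker η ⊓ biRadical ω) P hPK x (w, 0) = 0}
      ⊆ {x : V × Module.Dual ℝ ↥(LinearMap.ker η ⊓ biRadical ω) | x.2 = 0}) :=
  cosymplectic_thickening_coisotropic_general V η ω halt P hidem hPK hrange
end

section
/- Let V be a finite-dimensional real vector space, ω₁, …, ω_k alternating bilinear forms on V, K := ⋂_{j=1}^{k} rad ω_j, and P a linear projection of V onto K. On Ṽ := V × K* define, for each j, the thickened form ω̃_j((v,α),(w,β)) := ω_j(v,w) + α(P w) − β(P v). Then ⋂_{j=1}^{k} rad ω̃_j = {0}: if ω̃_j(x, y) = 0 for all j ∈ {1,…,k} and all y ∈ Ṽ, then x = 0. -/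
/-- For a `k`-pre-symplectic structure `{ω_j}` on a finite-dimensional real
vector space `V`, with `K = ⋂_j rad ω_j` and `P` a projection onto `K`, the thickened forms
`ω̃_j` on `Ṽ = V × K*` have trivial common radical. -/
theorem k_symplectic_thickening_nondegenerate
    (V : Type*) [AddCommGroup V] [Module ℝ V] [FiniteDimensional ℝ V]
    (k : ℕ) (hk : 0 < k)
    (ω : Fin k → (V →ₗ[ℝ] V →ₗ[ℝ] ℝ)) (halt : ∀ j v, ω j v v = 0)
    (P : V →ₗ[ℝ] V) (hidem : P ∘ₗ P = P)
    (hPK : ∀ v : V, P v ∈ ⨅ j, biRadical (ω j))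
    (hrange : LinearMap.range P = ⨅ j, biRadical (ω j)) :
    ∀ x : V × Module.Dual ℝ ↥(⨅ j, biRadical (ω j)),
      (∀ (j : Fin k) (y : V × Module.Dual ℝ ↥(⨅ j, biRadical (ω j))),
        thick (ω j) (⨅ j, biRadical (ω j)) P hPK x y = 0) →
      x = 0 := by
  intro x hx
  obtain ⟨v, α⟩ := x
  obtain ⟨j0⟩ : Nonempty (Fin k) := ⟨⟨0, hk⟩⟩
  have h0 : (⟨P (0:V), hPK 0⟩ : ↥(⨅ j, biRadical (ω j))) = 0 := Subtype.ext (by simp)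
  -- P v = 0
  have hPv : P v = 0 := by
    have h1 : ∀ β : Module.Dual ℝ ↥(⨅ j, biRadical (ω j)), β ⟨P v, hPK v⟩ = 0 := by
      intro β
      have h := hx j0 (0, β)
      simp only [thick] at h
      rw [h0] at h
      simp only [map_zero, zero_add, zero_sub, neg_eq_zero] at h
      exact h
    have h2 : (⟨P v, hPK v⟩ : ↥(⨅ j, biRadical (ω j))) = 0 :=
      (Module.forall_dual_apply_eq_zero_iff ℝ _).mp h1
    exact congrArg Subtype.val h2
  -- ω j v w + α(P w) = 0
  have h2 : ∀ j w, ω j v w + α ⟨P w, hPK w⟩ = 0 := by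
    intro j w
    have h := hx j (w, 0)
    simpa [thick] using h
  -- skew symmetry
  have hskew : ∀ j (a b : V), ω j a b = - ω j b a := by
    intro j a b
    have h := halt j (a + b)
    simp [map_add, halt j a, halt j b] at h
    linarith
  have hfix : ∀ w ∈ (⨅ j, biRadical (ω j) : Submodule ℝ V), P w = w := by
    intro w hw
    obtain ⟨u, hu⟩ := hrange ▸ hw
    have hpp : P (P u) = P u := congrFun (congrArg DFunLike.coe hidem) u
    rw [← hu]; exact hpp
  -- α = 0
  have hα : α = 0 := by
    ext ⟨w, hw⟩
    have hrad : w ∈ biRadical (ω j0) := (Submodule.mem_iInf _).mp hw j0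
    have hωvw : ω j0 v w = 0 := by
      rw [hskew j0 v w, hrad v]; ring
    have heq : (⟨P w, hPK w⟩ : ↥(⨅ j, biRadical (ω j))) = ⟨w, hw⟩ :=
      Subtype.ext (hfix w hw)
    have h := h2 j0 w
    rw [hωvw, heq] at h
    simpa using h
  -- v ∈ K
  have hvK : v ∈ (⨅ j, biRadical (ω j) : Submodule ℝ V) := by
    rw [Submodule.mem_iInf]
    intro j w
    have h := h2 j w
    rw [hα] at h
    simpa using h
  have hv : v = 0 := by rw [← hfix v hvK, hPv]
  simp [hv, hα]
end

section
/- Let V be a finite-dimensional real vector space, ω₁, …, ω_k alternating bilinear forms on V, K := ⋂_{j=1}^{k} rad ω_j, P a linear projection of V onto K, and on Ṽ := V × K* let ω̃_j((v,α),(w,β)) := ω_j(v,w) + α(P w) − β(P v) for each j. Then the k-orthogonal of the subspace V × {0}, namely {x ∈ Ṽ : ω̃_j(x,(w,0)) = 0 for all j ∈ {1,…,k} and all w ∈ V}, equals K × {0}; in particular it is contained in V × {0}, so V × {0} is a k-coisotropic subspace of (Ṽ, {ω̃_j}). -/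
/-- For a `k`-pre-symplectic structure `{ω_j}` with `K = ⋂_j rad ω_j` and `P`
a projection onto `K`, the `k`-orthogonal of `V × {0}` with respect to the thickened forms
`ω̃_j` equals `K × {0}`; in particular it is contained in `V × {0}`, so `V × {0}` is a
`k`-coisotropic subspace of `(Ṽ, {ω̃_j})`. -/
theorem k_symplectic_thickening_coisotropic
    (V : Type*) [AddCommGroup V] [Module ℝ V] [FiniteDimensional ℝ V]
    (k : ℕ) (hk : 0 < k)
    (ω : Fin k → (V →ₗ[ℝ] V →ₗ[ℝ] ℝ)) (halt : ∀ j v, ω j v v = 0)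
    (P : V →ₗ[ℝ] V) (hidem : P ∘ₗ P = P)
    (hPK : ∀ v : V, P v ∈ ⨅ j, biRadical (ω j))
    (hrange : LinearMap.range P = ⨅ j, biRadical (ω j)) :
    ({x : V × Module.Dual ℝ ↥(⨅ j, biRadical (ω j)) |
        ∀ (j : Fin k) (w : V), thick (ω j) (⨅ j, biRadical (ω j)) P hPK x (w, 0) = 0}
      = {x : V × Module.Dual ℝ ↥(⨅ j, biRadical (ω j)) |
          x.1 ∈ (⨅ j, biRadical (ω j) : Submodule ℝ V) ∧ x.2 = 0}) ∧
    ({x : V × Module.Dual ℝ ↥(⨅ j, biRadical (ω j)) |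
        ∀ (j : Fin k) (w : V), thick (ω j) (⨅ j, biRadical (ω j)) P hPK x (w, 0) = 0}
      ⊆ {x : V × Module.Dual ℝ ↥(⨅ j, biRadical (ω j)) | x.2 = 0}) := by

  have hskew : ∀ j (v w : V), ω j v w = - ω j w v := by
    intro j v w
    have h := halt j (v + w)
    simp only [map_add, LinearMap.add_apply, halt j v, halt j w] at h
    linarith
  have hfix : ∀ u : ↥(⨅ j, biRadical (ω j)), P u.1 = u.1 := by
    intro u
    have hmem : u.1 ∈ LinearMap.range P := hrange.symm ▸ u.2
    obtain ⟨z, hz⟩ := hmem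
    have := LinearMap.ext_iff.1 hidem z
    simp only [LinearMap.comp_apply] at this
    rw [← hz, this]
  have key : {x : V × Module.Dual ℝ ↥(⨅ j, biRadical (ω j)) |
        ∀ (j : Fin k) (w : V), thick (ω j) (⨅ j, biRadical (ω j)) P hPK x (w, 0) = 0}
      = {x : V × Module.Dual ℝ ↥(⨅ j, biRadical (ω j)) |
          x.1 ∈ (⨅ j, biRadical (ω j) : Submodule ℝ V) ∧ x.2 = 0} := by
    ext x
    simp only [Set.mem_setOf_eq]
    constructor
    · intro h
      have hα : x.2 = 0 := by
        apply LinearMap.ext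
        intro u
        have h0 := h ⟨0, hk⟩ u.1
        simp only [thick, LinearMap.zero_apply, sub_zero] at h0
        have hrad : ω ⟨0, hk⟩ x.1 u.1 = 0 := by
          have hu : u.1 ∈ biRadical (ω ⟨0, hk⟩) := (Submodule.mem_iInf _).1 u.2 _
          rw [hskew]
          simp [hu x.1]
        have heq : (⟨P u.1, hPK u.1⟩ : ↥(⨅ j, biRadical (ω j))) = u :=
          Subtype.ext (hfix u)
        rw [hrad, heq] at h0
        simpa using h0
      refine ⟨(Submodule.mem_iInf _).2 fun j => fun w => ?_, hα⟩
      have h0 := h j w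
      simp only [thick, hα, LinearMap.zero_apply, sub_zero, add_zero] at h0
      exact h0
    · rintro ⟨hv, hα⟩
      intro j w
      have hrad : ω j x.1 w = 0 := (Submodule.mem_iInf _).1 hv j w
      simp [thick, hα, hrad]
  refine ⟨key, ?_⟩
  intro x hx
  rw [key] at hx
  exact hx.2
end

section
/- Let V be a finite-dimensional real vector space, η₁, …, η_k linear functionals on V, ω₁, …, ω_k alternating bilinear forms on V, K := (⋂_{i=1}^{k} ker η_i) ∩ (⋂_{j=1}^{k} rad ω_j), and P a linear projection of V onto K. On Ṽ := V × K* define η̃_i(v,α) := η_i(v) and ω̃_j((v,α),(w,β)) := ω_j(v,w) + α(P w) − β(P v). Then (⋂_{i=1}^{k} ker η̃_i) ∩ (⋂_{j=1}^{k} rad ω̃_j) = {0}: if η_i(v) = 0 for all i and ω̃_j((v,α), y) = 0 for all j and all y ∈ Ṽ, then (v,α) = (0,0). -/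
lemma thick_aux
    {V : Type*} [AddCommGroup V] [Module ℝ V] [FiniteDimensional ℝ V]
    {k : ℕ} (hk : 0 < k)
    (η : Fin k → (V →ₗ[ℝ] ℝ))
    (ω : Fin k → (V →ₗ[ℝ] V →ₗ[ℝ] ℝ)) (halt : ∀ j v, ω j v v = 0)
    (K : Submodule ℝ V)
    (P : V →ₗ[ℝ] V) (hidem : P ∘ₗ P = P)
    (hPK : ∀ v : V, P v ∈ K)
    (hrange : LinearMap.range P = K)
    (hKrad : ∀ w, w ∈ K → ∀ j (u : V), ω j w u = 0)
    (hKmem : ∀ v : V, (∀ i, η i v = 0) → (∀ j u, ω j v u = 0) → v ∈ K) :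
    ∀ x : V × Module.Dual ℝ K,
      (∀ i, η i x.1 = 0) →
      (∀ (j : Fin k) (y : V × Module.Dual ℝ K), thick (ω j) K P hPK x y = 0) →
      x = 0 := by
  intro x hη hω
  obtain ⟨j0⟩ : Nonempty (Fin k) := ⟨⟨0, hk⟩⟩
  have hskew : ∀ j (a b : V), ω j a b = - ω j b a := by
    intro j a b
    have h := halt j (a + b)
    simp only [map_add, LinearMap.add_apply, halt j a, halt j b] at h
    linarith
  have hPv : P x.1 = 0 := by
    have hβ : ∀ β : Module.Dual ℝ K, β ⟨P x.1, hPK x.1⟩ = 0 := by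
      intro β
      have h := hω j0 (0, β)
      simp only [thick] at h
      have h0 : (⟨P (0:V), hPK 0⟩ : K) = 0 := by ext; simp
      rw [h0] at h
      simp only [map_zero, LinearMap.map_zero] at h
      linarith
    have h1 : (⟨P x.1, hPK x.1⟩ : K) = 0 := by
      rw [← Module.forall_dual_apply_eq_zero_iff ℝ]
      exact hβ
    exact congrArg Subtype.val h1
  have hmain : ∀ j (w : V), ω j x.1 w + x.2 ⟨P w, hPK w⟩ = 0 := by
    intro j w
    have h := hω j (w, 0)
    simp only [thick] at h
    simpa [hPv] using h
  have hfix : ∀ w : V, w ∈ K → P w = w := by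
    intro w hw
    have hw' : w ∈ LinearMap.range P := hrange.symm ▸ hw
    obtain ⟨u, hu⟩ := hw'
    have h2 : P (P u) = P u := congrArg (fun f => f u) hidem
    rw [← hu]; exact h2
  have hα : x.2 = 0 := by
    ext w
    obtain ⟨w, hw⟩ := w
    have hwrad : ω j0 x.1 w = 0 := by
      rw [hskew j0 x.1 w, hKrad w hw j0 x.1, neg_zero]
    have h1 := hmain j0 w
    rw [hwrad, zero_add] at h1
    have h4 : (⟨P w, hPK w⟩ : K) = ⟨w, hw⟩ := by
      ext; exact hfix w hw
    rw [h4] at h1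
    simpa using h1
  have hvK : x.1 ∈ K := by
    refine hKmem x.1 hη fun j u => ?_
    have h1 := hmain j u
    rw [hα] at h1
    simpa using h1
  have hv0 : x.1 = 0 := by rw [← hfix x.1 hvK, hPv]
  exact Prod.ext hv0 hα

/-- For a `k`-pre-cosymplectic structure `({η_i}, {ω_j})` on a
finite-dimensional real vector space `V`, with
`K = (⋂_i ker η_i) ∩ (⋂_j rad ω_j)` and `P` a projection onto `K`, the thickened structure
`({η̃_i}, {ω̃_j})` on `Ṽ = V × K*` has trivial characteristic subspace. -/
theorem k_cosymplectic_thickening_nondegenerate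
    (V : Type*) [AddCommGroup V] [Module ℝ V] [FiniteDimensional ℝ V]
    (k : ℕ) (hk : 0 < k)
    (η : Fin k → (V →ₗ[ℝ] ℝ))
    (ω : Fin k → (V →ₗ[ℝ] V →ₗ[ℝ] ℝ)) (halt : ∀ j v, ω j v v = 0)
    (P : V →ₗ[ℝ] V) (hidem : P ∘ₗ P = P)
    (hPK : ∀ v : V, P v ∈ (⨅ i, LinearMap.ker (η i)) ⊓ (⨅ j, biRadical (ω j)))
    (hrange : LinearMap.range P = (⨅ i, LinearMap.ker (η i)) ⊓ (⨅ j, biRadical (ω j))) :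
    ∀ x : V × Module.Dual ℝ ↥((⨅ i, LinearMap.ker (η i)) ⊓ (⨅ j, biRadical (ω j))),
      (∀ i, η i x.1 = 0) →
      (∀ (j : Fin k)
          (y : V × Module.Dual ℝ ↥((⨅ i, LinearMap.ker (η i)) ⊓ (⨅ j, biRadical (ω j)))),
        thick (ω j) ((⨅ i, LinearMap.ker (η i)) ⊓ (⨅ j, biRadical (ω j))) P hPK x y = 0) →
      x = 0 := by
  refine thick_aux hk η ω halt _ P hidem hPK hrange ?_ ?_
  · intro w hw j u
    exact (Submodule.mem_iInf _ |>.mp hw.2 j) u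
  · intro v h1 h2
    exact ⟨Submodule.mem_iInf _ |>.mpr h1, Submodule.mem_iInf _ |>.mpr fun j => h2 j⟩
end

section
/- Let V be a finite-dimensional real vector space and k ≥ 1 a natural number with k ≤ finrank V. Let Λ^k V* denote the space of alternating k-linear forms on V, and let W := V × Λ^k V*. Then the map Ω defined by Ω((v₁,α₁),…,(v_{k+1},α_{k+1})) := Σ_{j=1}^{k+1} (−1)^{j+1} α_j(v₁,…,v̂_j,…,v_{k+1}) (where v̂_j means the argument v_j is omitted) is an alternating (k+1)-linear form on W, and it is nondegenerate: if x ∈ W satisfies Ω(x, y₁, …, y_k) = 0 for all y₁, …, y_k ∈ W, then x = 0. -/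
/-!
Ω is the alternatization of the pairing `(x, y₁, …, y_k) ↦ α(v₁, …, v_k)` for `x = (v, α)`.
To see that `x = (v, α)` is in its kernel only when `x = 0`, test it first against
`yᵢ = (wᵢ, 0)`: then `Ω(x, y) = α(w)`, so `α = 0`. If `v ≠ 0`, extend `v` to a linearly
independent family `v, w₁, …, w_{k-1}` (possible as `k ≤ dim V`) and take a `k`-form `β` with
`β(v, w) = 1`, namely a determinant on the span of the family pulled back along a projection;
testing against `(0, β), (w₁, 0), …, (w_{k-1}, 0)` gives `Ω = -β(v, w) ≠ 0`.
-/

open Module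

section LinearIndependent

variable {K V : Type*} [Field K] [AddCommGroup V] [Module K V]

theorem LinearIndependent.exists_alternatingMap_eq_one {n : ℕ} {u : Fin n → V}
    (hu : LinearIndependent K u) : ∃ β : V [⋀^Fin n]→ₗ[K] K, β u = 1 := by
  let b := Basis.span hu
  obtain ⟨p, hp⟩ :=
    LinearMap.exists_leftInverse_of_injective (Submodule.span K (Set.range u)).subtype (by simp)
  have hpu : p ∘ u = b := funext fun i => by
    simpa [b] using LinearMap.congr_fun hp (b i)
  exact ⟨b.det.compLinearMap p, (congrArg b.det hpu).trans b.det_self⟩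

theorem exists_linearIndependent_fin_cons_of_ne_zero {v : V} (hv : v ≠ 0) :
    ∀ {n : ℕ}, n < finrank K V →
      ∃ w : Fin n → V, LinearIndependent K (Fin.cons v w : Fin (n + 1) → V)
  | 0, _ => ⟨Fin.elim0, (linearIndependent_unique_iff (ι := Fin 1)).mpr hv⟩
  | n + 1, hn => by
    obtain ⟨w, hw⟩ := exists_linearIndependent_fin_cons_of_ne_zero hv (n := n) (by omega)
    obtain ⟨x, hx⟩ := exists_linearIndependent_snoc_of_lt_finrank hw hn
    exact ⟨Fin.snoc w x, by rwa [Fin.cons_snoc_eq_snoc_cons]⟩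

end LinearIndependent

namespace Multisymplectic

section CommRing

variable {R M : Type*} [CommRing R] [AddCommGroup M] [Module R M] {k : ℕ}

def sndCompFst :
    (M × M [⋀^Fin k]→ₗ[R] R) →ₗ[R] (M × M [⋀^Fin k]→ₗ[R] R) [⋀^Fin k]→ₗ[R] R where
  toFun x := x.2.compLinearMap (LinearMap.fst R M _)
  map_add' _ _ := rfl
  map_smul' _ _ := rfl

def canonicalForm : (M × M [⋀^Fin k]→ₗ[R] R) [⋀^Fin (k + 1)]→ₗ[R] R :=
  AlternatingMap.alternatizeUncurryFin sndCompFst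

theorem canonicalForm_apply (y : Fin (k + 1) → M × M [⋀^Fin k]→ₗ[R] R) :
    canonicalForm y =
      ∑ j : Fin (k + 1), (-1 : R) ^ (j : ℕ) * (y j).2 (fun i => (y (j.succAbove i)).1) := by
  simp only [canonicalForm, AlternatingMap.alternatizeUncurryFin_apply, zsmul_eq_mul,
    Int.cast_pow, Int.cast_neg, Int.cast_one]
  rfl

theorem canonicalForm_cons_of_snd_eq_zero (x : M × M [⋀^Fin k]→ₗ[R] R)
    (ys : Fin k → M × M [⋀^Fin k]→ₗ[R] R) (hys : ∀ i, (ys i).2 = 0) :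
    canonicalForm (Fin.cons x ys) = x.2 (fun i => (ys i).1) := by
  simp [canonicalForm_apply, Fin.sum_univ_succ, hys]

theorem canonicalForm_cons_cons (v : M) (β : M [⋀^Fin (k + 1)]→ₗ[R] R) (w : Fin k → M) :
    canonicalForm (Fin.cons (v, 0) (Fin.cons (0, β) fun i => (w i, 0))) = -β (Fin.cons v w) := by
  have hargs : (fun i => ((Fin.cons (v, 0) (Fin.cons (0, β) fun i => (w i, 0)) :
      Fin (k + 2) → M × M [⋀^Fin (k + 1)]→ₗ[R] R) (Fin.succAbove 1 i)).1) = Fin.cons v w := by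
    funext i
    cases i using Fin.cases <;> simp
  simp [canonicalForm_apply, Fin.sum_univ_succ, hargs]

end CommRing

theorem canonicalForm_nondegenerate {K V : Type*} [Field K] [AddCommGroup V] [Module K V]
    {n : ℕ} (hn : n + 1 ≤ finrank K V) (x : V × V [⋀^Fin (n + 1)]→ₗ[K] K)
    (hx : ∀ ys, canonicalForm (Fin.cons x ys) = 0) : x = 0 := by
  obtain ⟨v, α⟩ := x
  obtain rfl : α = 0 := by
    ext w
    simpa [canonicalForm_cons_of_snd_eq_zero] using hx fun i => (w i, 0)
  obtain rfl : v = 0 := by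
    by_contra hv
    obtain ⟨w, hw⟩ := exists_linearIndependent_fin_cons_of_ne_zero hv hn
    obtain ⟨β, hβ⟩ := hw.exists_alternatingMap_eq_one
    have h := hx (Fin.cons (0, β) fun i => (w i, 0))
    rw [canonicalForm_cons_cons, hβ] at h
    norm_num at h
  rfl

end Multisymplectic

theorem canonical_multisymplectic_nondegenerate_general
    (V : Type*) [AddCommGroup V] [Module ℝ V]
    (k : ℕ) (hk : 1 ≤ k) (hkV : k ≤ Module.finrank ℝ V) :
    ∃ Ω : AlternatingMap ℝ (V × AlternatingMap ℝ V ℝ (Fin k)) ℝ (Fin (k + 1)),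
      (∀ y : Fin (k + 1) → V × AlternatingMap ℝ V ℝ (Fin k),
        Ω y = ∑ j : Fin (k + 1),
          (-1 : ℝ) ^ (j : ℕ) * (y j).2 (fun i => (y (j.succAbove i)).1)) ∧
      (∀ x : V × AlternatingMap ℝ V ℝ (Fin k),
        (∀ ys : Fin k → V × AlternatingMap ℝ V ℝ (Fin k), Ω (Fin.cons x ys) = 0) →
        x = 0) := by
  obtain ⟨n, rfl⟩ := Nat.exists_eq_add_of_le' hk
  exact ⟨Multisymplectic.canonicalForm, Multisymplectic.canonicalForm_apply,
    Multisymplectic.canonicalForm_nondegenerate hkV⟩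

/-- On `W = V × Λ^k V*` (with `V` finite-dimensional real and
`1 ≤ k ≤ finrank V`), the formula
`Ω((v₁,α₁),…,(v_{k+1},α_{k+1})) = Σ_j (−1)^{j+1} α_j(v₁,…,v̂_j,…,v_{k+1})`
defines an alternating `(k+1)`-linear form on `W`, and this form is nondegenerate: if
`Ω(x, y₁, …, y_k) = 0` for all `y₁, …, y_k ∈ W`, then `x = 0`. -/
theorem canonical_multisymplectic_nondegenerate
    (V : Type*) [AddCommGroup V] [Module ℝ V] [FiniteDimensional ℝ V]
    (k : ℕ) (hk : 1 ≤ k) (hkV : k ≤ Module.finrank ℝ V) :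
    ∃ Ω : AlternatingMap ℝ (V × AlternatingMap ℝ V ℝ (Fin k)) ℝ (Fin (k + 1)),
      (∀ y : Fin (k + 1) → V × AlternatingMap ℝ V ℝ (Fin k),
        Ω y = ∑ j : Fin (k + 1),
          (-1 : ℝ) ^ (j : ℕ) * (y j).2 (fun i => (y (j.succAbove i)).1)) ∧
      (∀ x : V × AlternatingMap ℝ V ℝ (Fin k),
        (∀ ys : Fin k → V × AlternatingMap ℝ V ℝ (Fin k), Ω (Fin.cons x ys) = 0) →
        x = 0) :=
  canonical_multisymplectic_nondegenerate_general V k hk hkV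
end

section
/- Let V be a finite-dimensional real vector space, η₁, …, η_k linear functionals on V, ω₁, …, ω_k alternating bilinear forms on V, K := (⋂_{i=1}^{k} ker η_i) ∩ (⋂_{j=1}^{k} rad ω_j), P a linear projection of V onto K, and on Ṽ := V × K* let η̃_i(v,α) := η_i(v) and ω̃_j((v,α),(w,β)) := ω_j(v,w) + α(P w) − β(P v). Then the k-cosymplectic orthogonal of V × {0}, namely {(v,α) ∈ Ṽ : η_i(v) = 0 for all i ∈ {1,…,k} and ω̃_j((v,α),(w,0)) = 0 for all j ∈ {1,…,k} and all w ∈ V}, equals K × {0}; in particular it is contained in V × {0}, so V × {0} is a k-coisotropic subspace of (Ṽ, {η̃_i}, {ω̃_j}). -/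
/-- For a `k`-pre-cosymplectic structure `({η_i}, {ω_j})` with
`K = (⋂_i ker η_i) ∩ (⋂_j rad ω_j)` and `P` a projection onto `K`, the `k`-cosymplectic
orthogonal of `V × {0}` in the thickened structure `({η̃_i}, {ω̃_j})` equals `K × {0}`; in
particular it is contained in `V × {0}`, so `V × {0}` is `k`-coisotropic. -/
theorem k_cosymplectic_thickening_coisotropic
    (V : Type*) [AddCommGroup V] [Module ℝ V] [FiniteDimensional ℝ V]
    (k : ℕ) (hk : 0 < k)
    (η : Fin k → (V →ₗ[ℝ] ℝ))
    (ω : Fin k → (V →ₗ[ℝ] V →ₗ[ℝ] ℝ)) (halt : ∀ j v, ω j v v = 0)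
    (P : V →ₗ[ℝ] V) (hidem : P ∘ₗ P = P)
    (hPK : ∀ v : V, P v ∈ (⨅ i, LinearMap.ker (η i)) ⊓ (⨅ j, biRadical (ω j)))
    (hrange : LinearMap.range P = (⨅ i, LinearMap.ker (η i)) ⊓ (⨅ j, biRadical (ω j))) :
    ({x : V × Module.Dual ℝ ↥((⨅ i, LinearMap.ker (η i)) ⊓ (⨅ j, biRadical (ω j))) |
        (∀ i, η i x.1 = 0) ∧
          ∀ (j : Fin k) (w : V),
            thick (ω j) ((⨅ i, LinearMap.ker (η i)) ⊓ (⨅ j, biRadical (ω j))) P hPK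
              x (w, 0) = 0}
      = {x : V × Module.Dual ℝ ↥((⨅ i, LinearMap.ker (η i)) ⊓ (⨅ j, biRadical (ω j))) |
          x.1 ∈ (⨅ i, LinearMap.ker (η i)) ⊓ (⨅ j, biRadical (ω j)) ∧ x.2 = 0}) ∧
    ({x : V × Module.Dual ℝ ↥((⨅ i, LinearMap.ker (η i)) ⊓ (⨅ j, biRadical (ω j))) |
        (∀ i, η i x.1 = 0) ∧
          ∀ (j : Fin k) (w : V),
            thick (ω j) ((⨅ i, LinearMap.ker (η i)) ⊓ (⨅ j, biRadical (ω j))) P hPK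
              x (w, 0) = 0}
      ⊆ {x : V × Module.Dual ℝ ↥((⨅ i, LinearMap.ker (η i)) ⊓ (⨅ j, biRadical (ω j))) |
          x.2 = 0}) := by
  have main :
      {x : V × Module.Dual ℝ ↥((⨅ i, LinearMap.ker (η i)) ⊓ (⨅ j, biRadical (ω j))) |
        (∀ i, η i x.1 = 0) ∧
          ∀ (j : Fin k) (w : V),
            thick (ω j) ((⨅ i, LinearMap.ker (η i)) ⊓ (⨅ j, biRadical (ω j))) P hPK
              x (w, 0) = 0}
      = {x : V × Module.Dual ℝ ↥((⨅ i, LinearMap.ker (η i)) ⊓ (⨅ j, biRadical (ω j))) |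
          x.1 ∈ (⨅ i, LinearMap.ker (η i)) ⊓ (⨅ j, biRadical (ω j)) ∧ x.2 = 0} := by
    set K := (⨅ i, LinearMap.ker (η i)) ⊓ (⨅ j, biRadical (ω j)) with hK
    have skew : ∀ j (v w : V), ω j v w = - ω j w v := by
      intro j v w
      have h := halt j (v + w)
      simp only [map_add, LinearMap.add_apply, halt] at h
      linarith
    have hfix : ∀ x ∈ K, P x = x := by
      intro x hx
      rw [← hrange] at hx
      obtain ⟨y, rfl⟩ := hx
      have := congrArg (fun f => f y) hidem
      simpa using this
    ext x
    simp only [Set.mem_setOf_eq, thick]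
    constructor
    · rintro ⟨hη, hω⟩
      have hα : x.2 = 0 := by
        ext w
        have hw := hω ⟨0, hk⟩ (w : V)
        have h1 : ω ⟨0, hk⟩ x.1 (w : V) = 0 := by
          rw [skew]
          have : (w : V) ∈ ⨅ j, biRadical (ω j) := (Submodule.mem_inf.mp w.2).2
          have := (Submodule.mem_iInf _).mp this ⟨0, hk⟩
          simp [this x.1]
        have h2 : (⟨P (w : V), hPK _⟩ : K) = w := Subtype.ext (hfix _ w.2)
        simp only [h1, h2, LinearMap.zero_apply, sub_zero, zero_add] at hw
        simpa using hw
      refine ⟨?_, hα⟩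
      rw [Submodule.mem_inf]
      constructor
      · exact (Submodule.mem_iInf _).mpr fun i => hη i
      · refine (Submodule.mem_iInf _).mpr fun j => ?_
        intro w
        have hw := hω j w
        rw [hα] at hw
        simpa using hw
    · rintro ⟨hv, hα⟩
      have hrad : ∀ j (w : V), ω j x.1 w = 0 := by
        intro j w
        have : x.1 ∈ ⨅ j, biRadical (ω j) := (Submodule.mem_inf.mp hv).2
        exact (Submodule.mem_iInf _).mp this j w
      have hker : ∀ i, η i x.1 = 0 := by
        intro i
        have : x.1 ∈ ⨅ i, LinearMap.ker (η i) := (Submodule.mem_inf.mp hv).1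
        exact (Submodule.mem_iInf _).mp this i
      refine ⟨hker, fun j w => ?_⟩
      simp [hα, hrad j w]
  exact ⟨main, fun x hx => ((main ▸ hx : _)).2⟩
end
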